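/- Let N ≥ 3, a ∈ ℂ, and let U be an N×N complex matrix with U² = a·I and U_{N,1} ≠ 0. Define, for 2 ≤ i,j ≤ N−1, the nested matrix U⁽²⁾_{i,j} = U_{i,j} − U_{i,1}·U_{N,1}⁻¹·U_{N,j}. Then: (1) for all 2 ≤ i,l ≤ N−1, Σ_{n=2}^{N−1} U⁽²⁾_{i,n}·U⁽²⁾_{n,l} = a·δ_{i,l}; and (2) Σ_{n=2}^{N−1} U⁽²⁾_{n,n} = Σ_{n=1}^{N} U_{n,n}. -/
import Mathlib


/-- The nested asymptotic matrix
`U⁽²⁾_{i,j} = U_{i,j} − U_{i,1} U_{N,1}⁻¹ U_{N,j}`. -/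
noncomputable def nestedUU (N : ℕ) (hN : 3 ≤ N) (U : Matrix (Fin N) (Fin N) ℂ)
    (i j : Fin N) : ℂ :=
  U i j - U i ⟨0, by omega⟩ * (U ⟨N - 1, by omega⟩ ⟨0, by omega⟩)⁻¹ * U ⟨N - 1, by omega⟩ j

/-- Recursion (3.31) for the leading asymptotic terms of nested uncrossed K-matrices:
if `U² = a·1` and `U_{N,1} ≠ 0`, then the nested matrix `U⁽²⁾` again squares to `a`
times the identity (of size N−2) and has the same trace. -/
theorem stmt_16 (N : ℕ) (hN : 3 ≤ N) (a : ℂ) (U : Matrix (Fin N) (Fin N) ℂ)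
    (hU : U * U = a • (1 : Matrix (Fin N) (Fin N) ℂ))
    (hU' : U ⟨N - 1, by omega⟩ ⟨0, by omega⟩ ≠ 0) :
    (∀ i l : Fin N,
      i ≠ (⟨0, by omega⟩ : Fin N) → i ≠ (⟨N - 1, by omega⟩ : Fin N) →
      l ≠ (⟨0, by omega⟩ : Fin N) → l ≠ (⟨N - 1, by omega⟩ : Fin N) →
      ∑ n ∈ Finset.univ.filter
          (fun n : Fin N => n ≠ (⟨0, by omega⟩ : Fin N) ∧ n ≠ (⟨N - 1, by omega⟩ : Fin N)),
        nestedUU N hN U i n * nestedUU N hN U n l = a * (if i = l then 1 else 0)) ∧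
    (∑ n ∈ Finset.univ.filter
        (fun n : Fin N => n ≠ (⟨0, by omega⟩ : Fin N) ∧ n ≠ (⟨N - 1, by omega⟩ : Fin N)),
      nestedUU N hN U n n) = ∑ n : Fin N, U n n := by
  set e0 : Fin N := ⟨0, by omega⟩ with he0
  set eN : Fin N := ⟨N - 1, by omega⟩ with heN
  have hne : eN ≠ e0 := by
    simp [he0, heN, Fin.ext_iff]; omega
  have hUU : ∀ i j : Fin N, ∑ n, U i n * U n j = a * (if i = j then 1 else 0) := by
    intro i j
    have := congrFun (congrFun hU i) j
    simpa [Matrix.mul_apply, Matrix.one_apply, mul_ite] using this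
  set c : ℂ := (U eN e0)⁻¹ with hc
  have hnr : ∀ i : Fin N, nestedUU N hN U i e0 = 0 := by
    intro i
    simp only [nestedUU, ← he0, ← heN, ← hc]
    rw [mul_assoc, hc, inv_mul_cancel₀ hU', mul_one, sub_self]
  have hnl : ∀ j : Fin N, nestedUU N hN U eN j = 0 := by
    intro j
    simp only [nestedUU, ← he0, ← heN, ← hc]
    rw [hc, mul_inv_cancel₀ hU', one_mul, sub_self]
  -- reduce filtered sums to full sums when the summand vanishes at e0 and eN
  have hfull : ∀ f : Fin N → ℂ, f e0 = 0 → f eN = 0 →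
      (∑ n ∈ Finset.univ.filter (fun n : Fin N => n ≠ e0 ∧ n ≠ eN), f n) = ∑ n, f n := by
    intro f h0 hNN
    rw [Finset.sum_filter]
    refine Finset.sum_congr rfl fun n _ => ?_
    by_cases h1 : n = e0
    · simp [h1, h0]
    · by_cases h2 : n = eN
      · simp [h2, hNN]
      · simp [h1, h2]
  constructor
  · intro i l hi0 hiN hl0 hlN
    rw [hfull _ (by rw [hnr]; ring) (by rw [hnl]; ring)]
    have expand : ∀ n : Fin N, nestedUU N hN U i n * nestedUU N hN U n l =
        U i n * U n l - (U i n * U n e0) * (c * U eN l)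
          - (U i e0 * c) * (U eN n * U n l)
          + (U i e0 * c) * (U eN n * U n e0) * (c * U eN l) := by
      intro n
      simp only [nestedUU, ← he0, ← heN, ← hc]
      ring
    simp only [expand]
    rw [Finset.sum_add_distrib, Finset.sum_sub_distrib, Finset.sum_sub_distrib]
    have h1 : ∑ n, (U i n * U n e0) * (c * U eN l)
        = (∑ n, U i n * U n e0) * (c * U eN l) := by rw [Finset.sum_mul]
    have h2 : ∑ n, (U i e0 * c) * (U eN n * U n l)
        = (U i e0 * c) * ∑ n, U eN n * U n l := by rw [Finset.mul_sum]
    have h3 : ∑ n, (U i e0 * c) * (U eN n * U n e0) * (c * U eN l)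
        = (U i e0 * c) * (∑ n, U eN n * U n e0) * (c * U eN l) := by
      rw [Finset.mul_sum, Finset.sum_mul]
    rw [h1, h2, h3, hUU, hUU, hUU, hUU, if_neg (show ¬ i = e0 from hi0),
      if_neg (show ¬ eN = l from fun h => hlN h.symm),
      if_neg (show ¬ eN = e0 from hne)]
    ring
  · rw [hfull (fun n => nestedUU N hN U n n) (hnr e0) (hnl eN)]
    have expand : ∀ n : Fin N, nestedUU N hN U n n
        = U n n - (U n e0 * U eN n) * c := by
      intro n
      simp only [nestedUU, ← he0, ← heN, ← hc]
      ring
    simp only [expand]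
    rw [Finset.sum_sub_distrib, ← Finset.sum_mul]
    have : ∑ n, U n e0 * U eN n = ∑ n, U eN n * U n e0 :=
      Finset.sum_congr rfl fun n _ => mul_comm _ _
    rw [this, hUU, if_neg hne]
    ring
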